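/- arXiv:cs/0703064 — 5 statements merged into one kernel-verified Lean document; each statement's English description precedes it below -/
import Mathlib

section
/- Let Σ be a finite alphabet and let R ⊆ (Σ*)^{k+l} be a regular relation of arity n = k+l whose convolution ⊗R is recognised by a finite automaton with p states. Suppose R is locally finite with parameters k and l, i.e. for every k-tuple x̄ of words over Σ there are only finitely many l-tuples ȳ with (x̄,ȳ) ∈ R. Then for every (x̄,ȳ) ∈ R one has max{|y| : y ∈ ȳ} − max{|x| : x ∈ x̄} ≤ p. -/
/-!
If `max |y| > max |x| + p`, the part of `⊗(x̄, ȳ)` beyond position `max |x|` is longer than the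
number of states, so a loop inside it can be pumped. Every pumped word is again accepted, hence is
`⊗(x̄', ȳ')` for some `(x̄', ȳ') ∈ R`; since the pumped letters carry `⋄` in all `x`-components,
`x̄' = x̄`, and as the pumped words are pairwise distinct, so are the tuples `ȳ'`.
This contradicts local finiteness at `x̄`.
-/

/-- The convolution of an `n`-tuple of words over `α`: the word over the padded
alphabet `Fin n → Option α` whose `k`-th letter has `i`-th component the `k`-th
letter of the `i`-th word (and `none`, i.e. the padding symbol `⋄`, if `k` is
beyond the end of that word). Its length is the maximum of the lengths. -/
def conv {α : Type*} {n : ℕ} (w : Fin n → List α) : List (Fin n → Option α) :=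
  (List.range (Finset.univ.sup fun i => (w i).length)).map fun k i => (w i)[k]?

theorem List.filterMap_getElem?_range {α : Type*} (l : List α) {L : ℕ} (h : l.length ≤ L) :
    (List.range L).filterMap (l[·]?) = l := by
  induction l generalizing L with
  | nil => simp
  | cons a l ih =>
    obtain ⟨L, rfl⟩ := Nat.exists_eq_add_of_lt h
    rw [List.range_succ_eq_map, List.filterMap_cons, List.filterMap_map]
    simp [ih (L := l.length + L) (by omega)]

namespace DFA

variable {α σ : Type*} [Fintype σ] (M : DFA α σ)

theorem exists_injective_append_mem_accepts {u v : List α} (h : u ++ v ∈ M.accepts)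
    (hv : Fintype.card σ ≤ v.length) :
    ∃ s : ℕ → List α, Function.Injective s ∧ ∀ n, u ++ s n ∈ M.accepts ∧ s n ⊆ v := by
  obtain ⟨q, a, b, c, rfl, -, hb, hqa, hqb, hqc⟩ := M.evalFrom_split hv rfl
  have hpow (n : ℕ) : M.evalFrom q (List.replicate n b).flatten = q :=
    M.evalFrom_of_pow hqb ⟨List.replicate n b, rfl, fun _ hz => List.eq_of_mem_replicate hz⟩
  refine ⟨fun n => a ++ (List.replicate n b).flatten ++ c, fun n₁ n₂ h => ?_, fun n => ⟨?_, ?_⟩⟩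
  · have hlen := congrArg List.length h
    simp only [List.length_append, List.length_flatten, List.map_replicate, List.sum_replicate,
      smul_eq_mul] at hlen
    exact Nat.eq_of_mul_eq_mul_right (List.length_pos_iff.2 hb) (by omega)
  · rwa [mem_accepts, eval, evalFrom_of_append, evalFrom_of_append, evalFrom_of_append, hqa, hpow,
      hqc, ← evalFrom_of_append]
  · intro e he
    simp only [List.mem_append, List.mem_flatten, List.mem_replicate] at he ⊢
    aesop

end DFA

section Convolution

variable {α : Type*} {n : ℕ} (w : Fin n → List α)

theorem length_le_length_conv (i : Fin n) : (w i).length ≤ (conv w).length := by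
  simpa [conv] using Finset.le_sup (f := fun i => (w i).length) (Finset.mem_univ i)

theorem filterMap_conv (i : Fin n) : (conv w).filterMap (· i) = w i := by
  rw [conv, List.filterMap_map]
  exact List.filterMap_getElem?_range _ (by simpa [conv] using length_le_length_conv w i)

theorem apply_eq_none_of_mem_drop_conv {i : Fin n} {m : ℕ} (hi : (w i).length ≤ m)
    {e : Fin n → Option α} (he : e ∈ (conv w).drop m) : e i = none := by
  rw [conv, ← List.map_drop] at he
  obtain ⟨k, hk, rfl⟩ := List.mem_map.1 he
  rw [List.range_eq_range', List.drop_range', List.mem_range'_1] at hk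
  simp only [List.getElem?_eq_none_iff]
  omega

theorem fst_eq_of_conv_append_eq_take_append {k l m : ℕ} {x x' : Fin k → List α}
    {y y' : Fin l → List α} (hx : ∀ j, (x j).length ≤ m) {v : List (Fin (k + l) → Option α)}
    (hv : v ⊆ (conv (Fin.append x y)).drop m)
    (h : (conv (Fin.append x y)).take m ++ v = conv (Fin.append x' y')) : x' = x := by
  funext j
  set w := conv (Fin.append x y)
  have hnone : ∀ u ⊆ w.drop m, u.filterMap (· (Fin.castAdd l j)) = [] := fun u hu =>
    List.filterMap_eq_nil_iff.2 fun e he =>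
      apply_eq_none_of_mem_drop_conv _ (by simpa using hx j) (hu he)
  calc x' j = (w.take m ++ v).filterMap (· (Fin.castAdd l j)) := by
        rw [h, filterMap_conv, Fin.append_left]
    _ = (w.take m ++ w.drop m).filterMap (· (Fin.castAdd l j)) := by
        rw [List.filterMap_append, List.filterMap_append, hnone _ hv, hnone _ (List.Subset.refl _)]
    _ = x j := by rw [List.take_append_drop, filterMap_conv, Fin.append_left]

end Convolution

theorem locally_finite_regular_length_bound_general
    {Γ : Type*} {k l p : ℕ}
    (R : Set ((Fin k → List Γ) × (Fin l → List Γ)))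
    (M : DFA (Fin (k + l) → Option Γ) (Fin p))
    (hM : M.accepts = {w | ∃ t ∈ R, w = conv (Fin.append t.1 t.2)})
    (hfin : ∀ x : Fin k → List Γ, {y | (x, y) ∈ R}.Finite) :
    ∀ x y, (x, y) ∈ R →
      (Finset.univ.sup fun i => (y i).length) ≤
        (Finset.univ.sup fun i => (x i).length) + p := by
  intro x y hxy
  by_contra! hlong
  set m := Finset.univ.sup fun i => (x i).length
  set w := conv (Fin.append x y)
  have hxm (j : Fin k) : (x j).length ≤ m := Finset.le_sup (f := fun i => (x i).length) (by simp)
  have hcard : Fintype.card (Fin p) ≤ (w.drop m).length := by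
    have hyw : (Finset.univ.sup fun i => (y i).length) ≤ w.length := Finset.sup_le fun i _ => by
      simpa using length_le_length_conv (Fin.append x y) (Fin.natAdd k i)
    simp only [Fintype.card_fin, List.length_drop]
    omega
  have hacc : w.take m ++ w.drop m ∈ M.accepts := by
    rw [List.take_append_drop, hM]
    exact ⟨(x, y), hxy, rfl⟩
  obtain ⟨s, hs_inj, hs⟩ := M.exists_injective_append_mem_accepts hacc hcard
  have hpumped (n : ℕ) : ∃ t ∈ R, w.take m ++ s n = conv (Fin.append t.1 t.2) := by
    have h := (hs n).1
    rwa [hM] at h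
  choose z hzR hz using hpumped
  have hz_fst (n : ℕ) : (z n).1 = x := fst_eq_of_conv_append_eq_take_append hxm (hs n).2 (hz n)
  refine (Set.infinite_of_injective_forall_mem (f := fun n => (z n).2) ?_ fun n => ?_) (hfin x)
  · intro n₁ n₂ h
    apply hs_inj
    rw [← List.append_cancel_left_eq (w.take m), hz, hz, Prod.ext ((hz_fst n₁).trans (hz_fst n₂).symm) h]
  · show (x, (z n).2) ∈ R
    exact hz_fst n ▸ hzR n

/-- If `R ⊆ (Σ*)^{k+l}` is locally finite (each `k`-tuple has only finitely many
`l`-tuples related to it) and its convolution is recognised by an automaton with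
`p` states, then for every `(x̄,ȳ) ∈ R`, `max |y| - max |x| ≤ p`. -/
theorem locally_finite_regular_length_bound
    {Γ : Type*} [Fintype Γ] {k l p : ℕ}
    (R : Set ((Fin k → List Γ) × (Fin l → List Γ)))
    (M : DFA (Fin (k + l) → Option Γ) (Fin p))
    (hM : M.accepts = {w | ∃ t ∈ R, w = conv (Fin.append t.1 t.2)})
    (hfin : ∀ x : Fin k → List Γ, {y | (x, y) ∈ R}.Finite) :
    ∀ x y, (x, y) ∈ R →
      (Finset.univ.sup fun i => (y i).length) ≤
        (Finset.univ.sup fun i => (x i).length) + p :=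
  locally_finite_regular_length_bound_general R M hM hfin
end

section
/- Let (M,×) be a monoid whose underlying set M is a set of words over a finite alphabet Σ and whose multiplication is such that the graph {(x,y,x×y) : x,y ∈ M} is a regular relation whose convolution is recognised by a finite automaton with k states. Then for all elements s₁, …, s_m ∈ M, the product satisfies |s₁ × s₂ × ⋯ × s_m| ≤ maxᵢ |sᵢ| + k·⌈log₂ m⌉. -/
lemma length_conv {α : Type*} {n : ℕ} (w : Fin n → List α) :
    (conv w).length = Finset.univ.sup fun i => (w i).length := by
  simp [conv]

lemma getElem?_conv {α : Type*} {n : ℕ} (w : Fin n → List α) (m : ℕ)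
    (hm : m < Finset.univ.sup fun i => (w i).length) :
    (conv w)[m]? = some (fun i => (w i)[m]?) := by
  simp [conv, hm]

lemma conv_inj {α : Type*} {n : ℕ} {w w' : Fin n → List α} (h : conv w = conv w') : w = w' := by
  have hN : (Finset.univ.sup fun i => (w i).length) = Finset.univ.sup fun i => (w' i).length := by
    have := congrArg List.length h
    simpa [length_conv] using this
  funext i
  apply List.ext_getElem?
  intro m
  by_cases hm : m < Finset.univ.sup fun i => (w i).length
  · have h1 := getElem?_conv w m hm
    have h2 := getElem?_conv w' m (hN ▸ hm)
    rw [h, h2] at h1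
    exact (congrFun (Option.some.inj h1) i).symm
  · push_neg at hm
    have hw : (w i).length ≤ m := le_trans (Finset.le_sup (f := fun i => (w i).length) (Finset.mem_univ i)) hm
    have hw' : (w' i).length ≤ m := le_trans (Finset.le_sup (f := fun i => (w' i).length) (Finset.mem_univ i)) (hN ▸ hm)
    rw [List.getElem?_eq_none hw, List.getElem?_eq_none hw']

lemma sup3 {α : Type*} (a b z : List α) :
    (Finset.univ.sup fun i => ((![a,b,z] : Fin 3 → List α) i).length)
      = max (max a.length b.length) z.length := by
  show Finset.sup {0,1,2} _ = _
  simp [Finset.sup_insert, max_assoc]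

lemma conv_delete {α : Type*} {a b z : List α} {j1 j2 : ℕ} (hab : max a.length b.length ≤ j1)
    (h12 : j1 ≤ j2) (h2 : j2 ≤ z.length) :
    (conv ![a,b,z]).take j1 ++ (conv ![a,b,z]).drop j2
      = conv ![a,b, z.take j1 ++ z.drop j2] := by
  set z' := z.take j1 ++ z.drop j2 with hz'
  have hlz' : z'.length = j1 + (z.length - j2) := by
    simp [hz']; omega
  have hN : (Finset.univ.sup fun i => ((![a,b,z] : Fin 3 → List α) i).length) = z.length := by
    rw [sup3]; omega
  have hN' : (Finset.univ.sup fun i => ((![a,b,z'] : Fin 3 → List α) i).length) = z'.length := by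
    rw [sup3]; omega
  have hlc : (conv ![a,b,z]).length = z.length := by rw [length_conv, hN]
  have ha : a.length ≤ j1 := le_trans (le_max_left _ _) hab
  have hb : b.length ≤ j1 := le_trans (le_max_right _ _) hab
  apply List.ext_getElem?
  intro m
  have hlt : ((conv ![a,b,z]).take j1).length = j1 := by
    rw [List.length_take, hlc]; omega
  by_cases hm1 : m < j1
  · rw [List.getElem?_append_left (by rw [hlt]; omega), List.getElem?_take_of_lt hm1,
      getElem?_conv _ m (by rw [hN]; omega), getElem?_conv _ m (by rw [hN']; omega)]
    congr 1
    funext i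
    fin_cases i
    · rfl
    · rfl
    · show z[m]? = z'[m]?
      rw [hz', List.getElem?_append_left (by simp; omega), List.getElem?_take_of_lt hm1]
  · by_cases hm2 : m < z'.length
    · rw [List.getElem?_append_right (by rw [hlt]; omega)]
      rw [hlt, List.getElem?_drop]
      have hm2' : j2 + (m - j1) < z.length := by omega
      rw [getElem?_conv _ _ (by rw [hN]; omega), getElem?_conv _ m (by rw [hN']; omega)]
      congr 1
      funext i
      fin_cases i
      · show a[j2 + (m - j1)]? = a[m]?
        rw [List.getElem?_eq_none (by omega), List.getElem?_eq_none (by omega)]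
      · show b[j2 + (m - j1)]? = b[m]?
        rw [List.getElem?_eq_none (by omega), List.getElem?_eq_none (by omega)]
      · show z[j2 + (m - j1)]? = z'[m]?
        rw [hz', List.getElem?_append_right (by simp; omega), List.getElem?_drop]
        congr 1
        simp; omega
    · rw [List.getElem?_eq_none, List.getElem?_eq_none]
      · rw [length_conv, hN']; omega
      · rw [List.length_append, List.length_drop, hlt, hlc]; omega

lemma mul_length_le
    {Γ : Type*} [Fintype Γ] (A : Set (List Γ)) [Monoid A] {k : ℕ}
    (M : DFA (Fin 3 → Option Γ) (Fin k))
    (hM : M.accepts =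
      {w | ∃ x y : A, w = conv ![(x : List Γ), (y : List Γ), ((x * y : A) : List Γ)]})
    (x y : A) :
    ((x * y : A) : List Γ).length ≤ max (x : List Γ).length (y : List Γ).length + k := by
  by_contra hcon
  push_neg at hcon
  set a := (x : List Γ) with hadef
  set b := (y : List Γ) with hbdef
  set z := ((x * y : A) : List Γ) with hzdef
  set n := max a.length b.length with hndef
  set c := conv ![a, b, z] with hcdef
  have hacc : c ∈ M.accepts := by rw [hM]; exact ⟨x, y, rfl⟩
  have hlc : c.length = z.length := by rw [hcdef, length_conv, sup3]; omega
  rw [DFA.mem_accepts] at hacc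
  have hc : c = c.take n ++ c.drop n := (List.take_append_drop n c).symm
  have hacc' : M.evalFrom (M.evalFrom M.start (c.take n)) (c.drop n) ∈ M.accept := by
    rw [← DFA.evalFrom_of_append, ← hc]; exact hacc
  obtain ⟨q, p, u, r, hsplit, hlen, hune, hp, hq, hr⟩ :=
    M.evalFrom_split (s := M.evalFrom M.start (c.take n))
      (t := M.evalFrom (M.evalFrom M.start (c.take n)) (c.drop n))
      (by rw [Fintype.card_fin, List.length_drop, hlc]; omega) rfl
  -- the pumped-down word is accepted
  have hacc2 : (c.take n ++ (p ++ r)) ∈ M.accepts := by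
    rw [DFA.mem_accepts]
    show M.evalFrom M.start _ ∈ M.accept
    rw [DFA.evalFrom_of_append, DFA.evalFrom_of_append, hp, hr]
    exact hacc'
  have hltn : (c.take n).length = n := by rw [List.length_take, hlc]; omega
  have hup : p.length + u.length ≤ k := by rwa [Fintype.card_fin] at hlen
  set j1 := n + p.length with hj1
  set j2 := n + p.length + u.length with hj2
  have e0 : c = (c.take n ++ p) ++ (u ++ r) := by
    rw [List.append_assoc, ← List.append_assoc p u r, ← hsplit, ← hc]
  have e1 : c.take j1 = c.take n ++ p := by
    nth_rewrite 1 [e0]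
    exact List.take_left' (by rw [List.length_append, hltn])
  have e2 : c.drop j2 = r := by
    have h3 : c = ((c.take n ++ p) ++ u) ++ r := by
      nth_rewrite 1 [e0]
      simp [List.append_assoc]
    nth_rewrite 1 [h3]
    exact List.drop_left' (by simp [hltn, hj2]; omega)
  have key : c.take j1 ++ c.drop j2 = conv ![a, b, z.take j1 ++ z.drop j2] := by
    apply conv_delete
    · omega
    · omega
    · omega
  have hmem : (c.take j1 ++ c.drop j2) ∈ M.accepts := by
    rw [e1, e2, List.append_assoc]; exact hacc2
  rw [hM, key] at hmem
  obtain ⟨X, Y, hXY⟩ := hmem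
  have := conv_inj hXY
  have h0 : a = (X : List Γ) := congrFun this 0
  have h1 : b = (Y : List Γ) := congrFun this 1
  have h2 : z.take j1 ++ z.drop j2 = ((X * Y : A) : List Γ) := congrFun this 2
  have hX : X = x := Subtype.ext h0.symm
  have hY : Y = y := Subtype.ext h1.symm
  rw [hX, hY, ← hzdef] at h2
  have := congrArg List.length h2
  rw [List.length_append, List.length_take, List.length_drop] at this
  have hune' : 0 < u.length := List.length_pos_iff.mpr hune
  omega

lemma le_foldr_max {l : List ℕ} {x : ℕ} (h : x ∈ l) : x ≤ l.foldr max 0 := by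
  induction l with
  | nil => simp at h
  | cons a t ih =>
    rcases List.mem_cons.mp h with rfl | h
    · exact le_max_left _ _
    · exact le_trans (ih h) (le_max_right _ _)

lemma foldr_max_le {l : List ℕ} {c : ℕ} (h : ∀ x ∈ l, x ≤ c) : l.foldr max 0 ≤ c := by
  induction l with
  | nil => simp
  | cons a t ih =>
    simp only [List.foldr_cons, max_le_iff]
    exact ⟨h a (by simp), ih fun x hx => h x (List.mem_cons_of_mem _ hx)⟩

lemma foldr_max_subset {l₁ l₂ : List ℕ} (h : l₁ ⊆ l₂) : l₁.foldr max 0 ≤ l₂.foldr max 0 :=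
  foldr_max_le fun x hx => le_foldr_max (h hx)

lemma prod_f_le {A : Type*} [Monoid A] (f : A → ℕ) (k : ℕ)
    (hmul : ∀ x y : A, f (x * y) ≤ max (f x) (f y) + k) :
    ∀ m (L : List A), L ≠ [] → L.length ≤ m →
      f L.prod ≤ (L.map f).foldr max 0 + k * Nat.clog 2 L.length := by
  intro m
  induction m with
  | zero =>
    intro L hne hlen
    exact absurd (List.length_eq_zero_iff.mp (Nat.le_zero.mp hlen)) hne
  | succ m ih =>
    intro L hne hlen
    by_cases h1 : L.length = 1
    · obtain ⟨s, rfl⟩ := List.length_eq_one_iff.mp h1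
      simp [Nat.clog_one_right]
    · have h2 : 2 ≤ L.length := by
        have := List.length_pos_iff.mpr hne; omega
      set t := (L.length + 1) / 2 with ht
      have hl1 : (L.take t).length = t := by rw [List.length_take]; omega
      have hl2 : (L.drop t).length = L.length - t := by rw [List.length_drop]
      have hne1 : L.take t ≠ [] := by
        apply List.ne_nil_of_length_pos; omega
      have hne2 : L.drop t ≠ [] := by
        apply List.ne_nil_of_length_pos; omega
      have ih1 := ih (L.take t) hne1 (by omega)
      have ih2 := ih (L.drop t) hne2 (by omega)
      have hprod : L.prod = (L.take t).prod * (L.drop t).prod := by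
        rw [← List.prod_append, List.take_append_drop]
      have hF1 : ((L.take t).map f).foldr max 0 ≤ (L.map f).foldr max 0 :=
        foldr_max_subset (List.map_subset f (List.take_subset t L))
      have hF2 : ((L.drop t).map f).foldr max 0 ≤ (L.map f).foldr max 0 :=
        foldr_max_subset (List.map_subset f (List.drop_subset t L))
      have hclog1 : Nat.clog 2 (L.take t).length = Nat.clog 2 t := by rw [hl1]
      have hclog2 : Nat.clog 2 (L.drop t).length ≤ Nat.clog 2 t := by
        rw [hl2]; exact Nat.clog_mono_right 2 (by omega)
      have hclogL : Nat.clog 2 L.length = Nat.clog 2 t + 1 := by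
        rw [Nat.clog_of_two_le (by norm_num) h2]
        congr 1
      calc f L.prod = f ((L.take t).prod * (L.drop t).prod) := by rw [hprod]
        _ ≤ max (f (L.take t).prod) (f (L.drop t).prod) + k := hmul _ _
        _ ≤ ((L.map f).foldr max 0 + k * Nat.clog 2 t) + k := by
            apply Nat.add_le_add_right
            apply max_le
            · exact le_trans ih1 (by rw [hclog1]; omega)
            · refine le_trans ih2 ?_
              have := Nat.mul_le_mul_left k hclog2
              omega
        _ = (L.map f).foldr max 0 + k * Nat.clog 2 L.length := by
            rw [hclogL, Nat.mul_succ]; omega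


/-- If `(M,×)` is a monoid whose underlying set `A` is a set of words over a finite
alphabet and the graph of multiplication is a regular relation recognised (in
convoluted form) by an automaton with `k` states, then
`|s₁ × ⋯ × s_m| ≤ max_i |s_i| + k·⌈log₂ m⌉`. -/
theorem automatic_monoid_product_length
    {Γ : Type*} [Fintype Γ] (A : Set (List Γ)) [Monoid A] {k : ℕ}
    (M : DFA (Fin 3 → Option Γ) (Fin k))
    (hM : M.accepts =
      {w | ∃ x y : A, w = conv ![(x : List Γ), (y : List Γ), ((x * y : A) : List Γ)]})
    (L : List A) (hL : L ≠ []) :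
    ((L.prod : A) : List Γ).length ≤
      (L.map fun s => ((s : A) : List Γ).length).foldr max 0 + k * Nat.clog 2 L.length := by
  exact prod_f_le (fun s => ((s : A) : List Γ).length) k
    (fun x y => mul_length_le A M hM x y) L.length L hL le_rfl
end

section
/- The multiplicative group (ℚ⁺,×) of positive rational numbers has no automatic presentation: there do not exist a finite alphabet Σ, a regular language A ⊆ Σ*, and a binary operation on A whose graph is a regular ternary relation, such that the resulting structure is a group isomorphic to (ℚ⁺,×). -/
open Function

section Words
variable {α : Type*} {n : ℕ}

theorem conv_getElem? (w : Fin n → List α) (k : ℕ) :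
    (conv w)[k]? = if ∃ i, k < (w i).length then some fun i => (w i)[k]? else none := by
  have hk : (k < Finset.univ.sup fun i => (w i).length) ↔ ∃ i, k < (w i).length := by
    simp [Finset.lt_sup_iff]
  simp only [conv, List.getElem?_map]
  split_ifs with h
  · rw [List.getElem?_range (hk.2 h), Option.map_some]
  · rw [List.getElem?_eq_none (by simpa using mt hk.1 h), Option.map_none]

theorem conv_injective : Injective (conv : (Fin n → List α) → _) := by
  intro w w' h
  funext i
  apply List.ext_getElem?
  intro k
  have := congrArg (·[k]?) h
  simp only [conv_getElem?] at this
  split_ifs at this with h1 h2 h2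
  · exact congrFun (Option.some.inj this) i
  · push Not at h1 h2
    simp [h1, h2]

theorem length_conv_of_le {x y z : List α} (hx : x.length ≤ z.length) (hy : y.length ≤ z.length) :
    (conv ![x, y, z]).length = z.length := by
  simp only [conv, List.length_map, List.length_range]
  refine le_antisymm (Finset.sup_le fun i _ => ?_)
    (Finset.le_sup (f := fun i => (![x, y, z] i).length) (Finset.mem_univ 2))
  fin_cases i <;> simp [hx, hy]

theorem conv_append_of_length_le {x y u : List α} (v : List α) (hx : x.length ≤ u.length)
    (hy : y.length ≤ u.length) :
    conv ![x, y, u ++ v] = conv ![x, y, u] ++ v.map fun c => ![none, none, some c] := by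
  apply List.ext_getElem?
  intro k
  simp only [conv_getElem?, List.getElem?_append, length_conv_of_le hx hy]
  by_cases hk : k < u.length
  · have h1 : ∃ i, k < (![x, y, u ++ v] i).length := ⟨2, by simp; omega⟩
    have h2 : ∃ i, k < (![x, y, u] i).length := ⟨2, hk⟩
    simp only [hk, h1, h2, if_true, Option.some.injEq]
    funext i
    fin_cases i <;> simp [List.getElem?_append_left hk]
  by_cases hk' : k < u.length + v.length
  · have h1 : ∃ i, k < (![x, y, u ++ v] i).length := ⟨2, by simp; omega⟩
    simp only [hk, h1, if_true, if_false, List.getElem?_map,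
      List.getElem?_eq_getElem (by omega : k - u.length < v.length), Option.map_some]
    congr 1
    funext i
    fin_cases i <;> simp [List.getElem?_append_right (not_lt.1 hk)] <;> omega
  · have h1 : ¬ ∃ i, k < (![x, y, u ++ v] i).length := by
      simp [Fin.exists_fin_succ]; omega
    simp only [hk, h1, if_false, List.getElem?_map,
      List.getElem?_eq_none (by omega : v.length ≤ k - u.length), Option.map_none]

theorem conv_triple_inj {x y z x' y' z' : List α} :
    conv ![x, y, z] = conv ![x', y', z'] ↔ x = x' ∧ y = y' ∧ z = z' := by
  simp [conv_injective.eq_iff, Matrix.vecCons_inj]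

theorem DFA.exists_append_mem_accepts_of_card_le {σ : Type*} [Fintype σ] (M : DFA α σ)
    {p x : List α} (hx : p ++ x ∈ M.accepts) (hlen : Fintype.card σ ≤ x.length) :
    ∃ a b c, x = a ++ b ++ c ∧ b ≠ [] ∧ p ++ (a ++ c) ∈ M.accepts := by
  obtain ⟨q, a, b, c, rfl, -, hb, hqa, hqb, hqc⟩ := M.evalFrom_split hlen rfl
  refine ⟨a, b, c, rfl, hb, ?_⟩
  rw [DFA.mem_accepts, DFA.eval, DFA.evalFrom_of_append, DFA.evalFrom_of_append, hqa, hqc]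
  rwa [DFA.mem_accepts, DFA.eval, DFA.evalFrom_of_append] at hx

theorem length_mul_le_of_isRegular {A : Set (List α)} (mul : A → A → A)
    (hmul : Language.IsRegular
      {w | ∃ x y : A, w = conv ![(x : List α), (y : List α), (mul x y : List α)]}) :
    ∃ C, ∀ x y : A,
      (mul x y : List α).length ≤ max (x : List α).length (y : List α).length + C := by
  obtain ⟨σ, _, M, hM⟩ := hmul
  refine ⟨Fintype.card σ, fun x y => ?_⟩
  by_contra! hlong
  set m := max (x : List α).length (y : List α).length
  obtain ⟨u, v, hzuv, hu⟩ : ∃ u v : List α, (mul x y : List α) = u ++ v ∧ u.length = m :=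
    ⟨_, _, (List.take_append_drop m _).symm, List.length_take_of_le (by omega)⟩
  have hxu : (x : List α).length ≤ u.length := hu ▸ le_max_left _ _
  have hyu : (y : List α).length ≤ u.length := hu ▸ le_max_right _ _
  have hacc : conv ![(x : List α), y, u] ++ v.map (fun c => ![none, none, some c]) ∈ M.accepts := by
    rw [← conv_append_of_length_le v hxu hyu, ← hzuv, hM]
    exact ⟨x, y, rfl⟩
  have hcard : Fintype.card σ ≤ v.length := by
    have := congrArg List.length hzuv
    simp only [List.length_append] at this
    omega
  obtain ⟨a, b, c, hv, hb, hacc'⟩ :=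
    M.exists_append_mem_accepts_of_card_le hacc (by simpa using hcard)
  obtain ⟨ab', c', rfl, hab, rfl⟩ := List.map_eq_append_iff.1 hv
  obtain ⟨a', b', rfl, rfl, rfl⟩ := List.map_eq_append_iff.1 hab
  rw [← List.map_append, ← conv_append_of_length_le _ hxu hyu, hM] at hacc'
  obtain ⟨x', y', hxy'⟩ := hacc'
  obtain ⟨hx', hy', hz'⟩ := conv_triple_inj.1 hxy'
  obtain rfl : x = x' := Subtype.ext hx'
  obtain rfl : y = y' := Subtype.ext hy'
  have hlen := congrArg List.length (hz'.trans hzuv)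
  have hb' : 0 < b'.length := List.length_pos_iff.2 (by simpa using hb)
  simp only [List.length_append] at hlen
  omega

end Words

section LengthGrowth
variable {M : Type*} (len : M → ℕ) {C : ℕ}

theorem len_pow_le [Monoid M] (hlen : ∀ x y, len (x * y) ≤ max (len x) (len y) + C) (x : M) :
    ∀ {n k : ℕ}, 1 ≤ k → k ≤ 2 ^ n → len (x ^ k) ≤ len x + C * n
  | 0, k, hk, hkn => by
    obtain rfl : k = 1 := by simp at hkn; omega
    simp
  | n + 1, k, hk, hkn => by
    obtain rfl | hk2 := eq_or_lt_of_le hk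
    · simp
    rw [pow_succ] at hkn
    have hq := len_pow_le hlen x (n := n) (k := k / 2) (by omega) (by omega)
    have hr := len_pow_le hlen x (n := n) (k := k - k / 2) (by omega) (by omega)
    calc len (x ^ k) = len (x ^ (k / 2) * x ^ (k - k / 2)) := by rw [← pow_add]; congr; omega
      _ ≤ max (len (x ^ (k / 2))) (len (x ^ (k - k / 2))) + C := hlen _ _
      _ ≤ len x + C * (n + 1) := by rw [Nat.mul_succ]; omega

theorem len_prod_le [CommMonoid M] (hlen : ∀ x y, len (x * y) ≤ max (len x) (len y) + C)
    {ι : Type*} {s : Finset ι} (hs : s.Nonempty) {f : ι → M} {L : ℕ} (hf : ∀ i ∈ s, len (f i) ≤ L) :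
    len (∏ i ∈ s, f i) ≤ L + C * s.card := by
  induction hs using Finset.Nonempty.cons_induction with
  | singleton a => simpa using (hf a (by simp)).trans (Nat.le_add_right _ _)
  | cons a s ha hs ih =>
    rw [Finset.prod_cons, Finset.card_cons, Nat.mul_succ]
    have h1 := hf a (by simp)
    have h2 := ih fun i hi => hf i (by simp [hi])
    have := hlen (f a) (∏ i ∈ s, f i)
    omega

end LengthGrowth

theorem Fintype.card_le_of_injective_of_length_le {ι Γ : Type*} [Fintype ι] [Fintype Γ]
    {f : ι → List Γ} (hf : Injective f) {N : ℕ} (hN : ∀ i, (f i).length ≤ N) :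
    Fintype.card ι ≤ (Fintype.card Γ + 1) ^ N := by
  have hF : Injective fun i (j : Fin N) => (f i)[(j : ℕ)]? := by
    intro i i' h
    refine hf (List.ext_getElem? fun k => ?_)
    by_cases hk : k < N
    · exact congrFun h ⟨k, hk⟩
    · rw [List.getElem?_eq_none ((hN i).trans (by omega)),
        List.getElem?_eq_none ((hN i').trans (by omega))]
  simpa using Fintype.card_le_of_injective _ hF

theorem Positive.val_prod {R : Type*} [CommSemiring R] [PartialOrder R] [IsStrictOrderedRing R]
    {ι : Type*} (s : Finset ι) (f : ι → {x : R // 0 < x}) :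
    ((∏ i ∈ s, f i : {x : R // 0 < x}) : R) = ∏ i ∈ s, (f i : R) := by
  classical
  induction s using Finset.induction_on with
  | empty => simp [Positive.val_one]
  | insert a s ha ih => simp [Finset.prod_insert ha, Positive.val_mul, ih]

theorem Nat.injective_prod_pow_of_prime {ι : Type*} [Fintype ι] {p : ι → ℕ}
    (hp : ∀ i, (p i).Prime) (hinj : Injective p) :
    Injective fun e : ι → ℕ => ∏ i, p i ^ e i := by
  have key (e : ι → ℕ) (j : ι) : (∏ i, p i ^ e i).factorization (p j) = e j := by
    rw [Nat.factorization_prod fun i _ => pow_ne_zero _ (hp i).ne_zero, Finsupp.finsetSum_apply,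
      Finset.sum_eq_single j]
    · simp [(hp j).factorization]
    · intro i _ hij
      simp [(hp i).factorization, hinj.ne hij]
    · simp
  intro e e' h
  funext j
  rw [← key e j, ← key e' j]
  exact congrArg (fun n => n.factorization (p j)) h

theorem exists_not_injective_prod_pow {G Γ : Type*} [CommMonoid G] [Fintype Γ] {enc : G → List Γ}
    (henc : Injective enc) {C : ℕ}
    (hC : ∀ x y, (enc (x * y)).length ≤ max (enc x).length (enc y).length + C) :
    ∃ m, ∀ g : Fin m → G, ¬ Injective fun e : Fin m → ℕ => ∏ i, g i ^ e i := by
  set b := Fintype.card Γ + 1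
  set m := b * (C + 1)
  refine ⟨m, fun g hg => ?_⟩
  set len := fun x => (enc x).length
  set L := Finset.univ.sup fun i => len (g i)
  set n := L + C * m + 1
  set P := fun v : Fin m → Fin (2 ^ n) => ∏ i, g i ^ ((v i : ℕ) + 1)
  have hP : Injective (enc ∘ P) := henc.comp fun v v' h =>
    funext fun i => Fin.ext (by simpa using congrFun (hg h) i)
  have hlenP (v) : len (P v) ≤ L + C * n + C * m := by
    have hm : (Finset.univ : Finset (Fin m)).Nonempty := ⟨⟨0, by positivity⟩, Finset.mem_univ _⟩
    simpa using len_prod_le len hC hm fun i _ =>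
      (len_pow_le len hC (g i) (by omega) (v i).isLt).trans
        (by gcongr; exact Finset.le_sup (f := fun i => len (g i)) (Finset.mem_univ i))
  have hcount := Fintype.card_le_of_injective_of_length_le hP hlenP
  simp only [Fintype.card_fun, Fintype.card_fin] at hcount
  have h2 : 2 ^ (n * m) ≤ 2 ^ (b * (L + C * n + C * m)) := calc
    2 ^ (n * m) = (2 ^ n) ^ m := pow_mul _ _ _
    _ ≤ b ^ (L + C * n + C * m) := hcount
    _ ≤ (2 ^ b) ^ (L + C * n + C * m) := by gcongr; exact Nat.lt_two_pow_self.le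
    _ = 2 ^ (b * (L + C * n + C * m)) := (pow_mul _ _ _).symm
  have hnm : n * m = b * (L + C * n + C * m) + b := by simp only [n, m]; ring
  have := (Nat.pow_le_pow_iff_right (by norm_num)).1 h2
  omega

theorem injective_prod_pow_nth_prime_pos_rat (m : ℕ) :
    Injective fun e : Fin m → ℕ => ∏ i : Fin m, (⟨(Nat.nth Nat.Prime i : ℚ),
      Nat.cast_pos.2 (Nat.prime_nth_prime i).pos⟩ : {q : ℚ // 0 < q}) ^ e i := by
  intro e e' h
  refine Nat.injective_prod_pow_of_prime (p := fun i : Fin m => Nat.nth Nat.Prime i)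
    (fun i => Nat.prime_nth_prime i)
    ((Nat.nth_injective Nat.infinite_setOfPred_prime).comp Fin.val_injective)
    (Nat.cast_injective (R := ℚ) ?_)
  simpa [Positive.val_prod, Positive.val_pow] using congrArg Subtype.val h

/-- The multiplicative group `(ℚ⁺, ×)` of positive rationals has no automatic
presentation. -/
theorem rat_pos_mul_not_automatic :
    ¬ ∃ (Γ : Type) (_ : Fintype Γ) (A : Set (List Γ)) (mul : A → A → A)
        (e : {q : ℚ // 0 < q} ≃ A),
        Language.IsRegular (A : Language Γ) ∧
        Language.IsRegular
          {w | ∃ x y : A, w = conv ![(x : List Γ), (y : List Γ), (mul x y : List Γ)]} ∧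
        ∀ x y : {q : ℚ // 0 < q}, e (x * y) = mul (e x) (e y) := by
  rintro ⟨Γ, _, A, mul, e, -, hmul, hhom⟩
  obtain ⟨C, hC⟩ := length_mul_le_of_isRegular mul hmul
  obtain ⟨m, hm⟩ := exists_not_injective_prod_pow (enc := fun q => (e q : List Γ))
    (Subtype.val_injective.comp e.injective) (C := C) fun x y => by
      simpa only [hhom] using hC (e x) (e y)
  exact hm _ (injective_prod_pow_nth_prime_pos_rat m)
end

section
/- No infinite field has an automatic presentation: if F is an infinite field, then there do not exist a finite alphabet Σ, a regular language A ⊆ Σ*, binary operations on A whose graphs are regular ternary relations, and elements of A interpreting 0 and 1, such that the resulting ring is isomorphic to F. -/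
namespace AutoAux

variable {α : Type*} {n : ℕ}

lemma length_conv (w : Fin n → List α) :
    (conv w).length = Finset.univ.sup fun i => (w i).length := by
  simp [conv]

lemma getElem?_conv (w : Fin n → List α) (k : ℕ) (hk : k < Finset.univ.sup fun i => (w i).length) :
    (conv w)[k]? = some (fun i => (w i)[k]?) := by
  simp [conv, List.getElem?_map, List.getElem?_range hk]

lemma length_le_sup (w : Fin n → List α) (i : Fin n) :
    (w i).length ≤ Finset.univ.sup fun i => (w i).length :=
  Finset.le_sup (f := fun i => (w i).length) (Finset.mem_univ i)

lemma conv_injective : Function.Injective (conv (α := α) (n := n)) := by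
  intro w w' h
  have hlen : (Finset.univ.sup fun i => (w i).length) =
      Finset.univ.sup fun i => (w' i).length := by
    have := congrArg List.length h
    simpa [length_conv] using this
  funext i
  apply List.ext_getElem?
  intro k
  by_cases hk : k < Finset.univ.sup fun i => (w i).length
  · have h1 := getElem?_conv w k hk
    have h2 := getElem?_conv w' k (hlen ▸ hk)
    rw [h] at h1
    have := Option.some_injective _ (h1.symm.trans h2)
    exact congrFun this i
  · push_neg at hk
    rw [List.getElem?_eq_none (le_trans (length_le_sup w i) hk),
      List.getElem?_eq_none (le_trans (length_le_sup w' i) (hlen ▸ hk))]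



variable {α : Type*} {n : ℕ}

lemma sup_eq (w : Fin n → List α) (i₀ : Fin n) (ha : ∀ i, (w i).length ≤ (w i₀).length) :
    (Finset.univ.sup fun i => (w i).length) = (w i₀).length :=
  le_antisymm (Finset.sup_le fun i _ => ha i)
    (Finset.le_sup (f := fun i => (w i).length) (Finset.mem_univ i₀))

lemma conv_cut (w : Fin n → List α) (i₀ : Fin n) (a : ℕ)
    (ha : ∀ i, i ≠ i₀ → (w i).length ≤ a) {i j : ℕ}
    (hai : a ≤ i) (hij : i ≤ j) (hj : j ≤ (w i₀).length) :
    (conv w).take i ++ (conv w).drop j =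
      conv (Function.update w i₀ ((w i₀).take i ++ (w i₀).drop j)) := by
  set W := w i₀ with hW
  set L := W.length with hL
  have hother : ∀ i', i' ≠ i₀ → (w i').length ≤ a := ha
  have hsupw : (Finset.univ.sup fun i' => (w i').length) = L := by
    apply sup_eq
    intro i'
    by_cases h : i' = i₀
    · subst h; rfl
    · exact le_trans (hother i' h) (le_trans hai (le_trans hij hj))
  set w' := Function.update w i₀ (W.take i ++ W.drop j) with hw'
  have hw'i₀ : w' i₀ = W.take i ++ W.drop j := Function.update_self _ _ _
  have hw'ne : ∀ i', i' ≠ i₀ → w' i' = w i' := fun i' h => Function.update_of_ne h _ _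
  have hL' : (w' i₀).length = i + (L - j) := by
    rw [hw'i₀]
    simp [List.length_take, List.length_drop, min_eq_left (le_trans hij hj), ← hL]
  have hiL' : i ≤ i + (L - j) := Nat.le_add_right _ _
  have hsupw' : (Finset.univ.sup fun i' => (w' i').length) = i + (L - j) := by
    rw [← hL']
    apply sup_eq
    intro i'
    by_cases h : i' = i₀
    · subst h; rfl
    · rw [hw'ne i' h, hL']
      exact le_trans (hother i' h) (le_trans hai hiL')
  have hlenconv : (conv w).length = L := by simp [conv, hsupw]
  have hlenconv' : (conv w').length = i + (L - j) := by simp [conv, hsupw']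
  have hgetw : ∀ k < L, (conv w)[k]? = some (fun i' => (w i')[k]?) := by
    intro k hk
    simp [conv, List.getElem?_map, List.getElem?_range, hsupw, hk]
  have hgetw' : ∀ k < i + (L - j), (conv w')[k]? = some (fun i' => (w' i')[k]?) := by
    intro k hk
    simp [conv, List.getElem?_map, List.getElem?_range, hsupw', hk]
  apply List.ext_getElem?
  intro k
  have htakelen : ((conv w).take i).length = i := by
    rw [List.length_take, hlenconv]
    exact min_eq_left (le_trans hij hj)
  rw [List.getElem?_append]
  by_cases hki : k < i
  · rw [if_pos (by rw [htakelen]; exact hki)]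
    rw [List.getElem?_take, if_pos hki]
    rw [hgetw k (lt_of_lt_of_le hki (le_trans hij hj)),
      hgetw' k (lt_of_lt_of_le hki hiL')]
    congr 1
    funext i'
    by_cases h : i' = i₀
    · subst h
      rw [hw'i₀, List.getElem?_append]
      have : k < (W.take i).length := by
        rw [List.length_take, min_eq_left (le_trans hij hj)]; exact hki
      rw [if_pos this, List.getElem?_take, if_pos hki]
    · rw [hw'ne i' h]
  · rw [if_neg (by rw [htakelen]; exact hki)]
    push_neg at hki
    rw [htakelen]
    rw [List.getElem?_drop]
    by_cases hk2 : k < i + (L - j)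
    · have hjk : j + (k - i) < L := by omega
      rw [hgetw _ hjk, hgetw' _ hk2]
      congr 1
      funext i'
      by_cases h : i' = i₀
      · subst h
        rw [hw'i₀, List.getElem?_append]
        have h1 : ¬ k < (W.take i).length := by
          rw [List.length_take, min_eq_left (le_trans hij hj)]; omega
        rw [if_neg h1, List.length_take, min_eq_left (le_trans hij hj),
          List.getElem?_drop]
      · rw [hw'ne i' h]
        have hlen' : (w i').length ≤ a := hother i' h
        rw [List.getElem?_eq_none (by omega), List.getElem?_eq_none (by omega)]
    · push_neg at hk2
      have h1 : (conv w).length ≤ j + (k - i) := by omega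
      have h2 : (conv w').length ≤ k := by omega
      rw [List.getElem?_eq_none h1, List.getElem?_eq_none h2]



lemma dfa_cut {β σ : Type*} [Fintype σ] (M : DFA β σ) {w : List β}
    (hw : w ∈ M.accepts) {a : ℕ} (h : a + Fintype.card σ < w.length) :
    ∃ i j, a ≤ i ∧ i < j ∧ j ≤ w.length ∧ w.take i ++ w.drop j ∈ M.accepts := by
  have hcard : (Finset.univ : Finset σ).card < (Finset.Icc a w.length).card := by
    rw [Nat.card_Icc, Finset.card_univ]
    omega
  obtain ⟨i, hi, j, hj, hne, heq⟩ :=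
    Finset.exists_ne_map_eq_of_card_lt_of_maps_to hcard
      (f := fun k => M.evalFrom M.start (w.take k)) (fun k _ => Finset.mem_univ _)
  simp only [Finset.mem_Icc] at hi hj
  wlog hlt : i < j generalizing i j
  · exact this j i hne.symm heq.symm hj hi (by omega)
  refine ⟨i, j, hi.1, hlt, hj.2, ?_⟩
  have key : M.evalFrom M.start (w.take i ++ w.drop j) = M.evalFrom M.start w := by
    rw [M.evalFrom_of_append, heq, ← M.evalFrom_of_append, List.take_append_drop]
  rwa [DFA.mem_accepts, DFA.eval, key, ← DFA.eval, ← DFA.mem_accepts]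

lemma syndetic {β σ : Type*} [Fintype σ] (M : DFA β σ) {w : List β}
    (hw : w ∈ M.accepts) {a : ℕ} (h : a ≤ w.length) :
    ∃ w' ∈ M.accepts, a ≤ w'.length ∧ w'.length ≤ a + Fintype.card σ := by
  obtain ⟨L, hL⟩ : ∃ L, w.length = L := ⟨_, rfl⟩
  induction L using Nat.strong_induction_on generalizing w with
  | _ L ih =>
    by_cases hle : w.length ≤ a + Fintype.card σ
    · exact ⟨w, hw, h, hle⟩
    · push_neg at hle
      obtain ⟨i, j, hai, hij, hjl, hmem⟩ := dfa_cut M hw (a := a) hle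
      have hlen : (w.take i ++ w.drop j).length = i + (w.length - j) := by
        simp [List.length_take, List.length_drop, min_eq_left (le_trans (le_of_lt hij) hjl)]
      exact ih (w.take i ++ w.drop j).length (by omega) hmem (by omega) rfl




variable {Γ : Type} {A : Set (List Γ)}

lemma update2 (x y z z' : List Γ) :
    Function.update ![x, y, z] (2 : Fin 3) z' = ![x, y, z'] := by
  funext i
  fin_cases i <;> simp [Function.update]

lemma update0 (x y z x' : List Γ) :
    Function.update ![x, y, z] (0 : Fin 3) x' = ![x', y, z] := by
  funext i
  fin_cases i <;> simp [Function.update]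

lemma bound3 {σ : Type} [Fintype σ] (M : DFA (Fin 3 → Option Γ) σ) (f : A → A → A)
    (hM : M.accepts = {w | ∃ x y : A, w = conv ![(x : List Γ), (y : List Γ), (f x y : List Γ)]})
    (x y : A) :
    (f x y : List Γ).length ≤
      max (x : List Γ).length (y : List Γ).length + Fintype.card σ := by
  by_contra hcon
  push_neg at hcon
  set a := max (x : List Γ).length (y : List Γ).length with ha
  set z : List Γ := (f x y : List Γ) with hz
  have hmem : conv ![(x : List Γ), (y : List Γ), z] ∈ M.accepts := by
    rw [hM]; exact ⟨x, y, rfl⟩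
  have hcomp : ∀ i : Fin 3, i ≠ 2 → (![(x : List Γ), (y : List Γ), z] i).length ≤ a := by
    intro i hi
    fin_cases i
    · simp [ha]
    · simp [ha]
    · simp at hi
  have hsup : (Finset.univ.sup fun i => (![(x : List Γ), (y : List Γ), z] i).length)
      = z.length := by
    apply sup_eq (i₀ := 2)
    intro i
    fin_cases i
    · simp; omega
    · simp; omega
    · simp
  have hlenw : (conv ![(x : List Γ), (y : List Γ), z]).length = z.length := by
    simp [conv, hsup]
  obtain ⟨i, j, hai, hij, hjl, hcut⟩ := dfa_cut M hmem (a := a) (by omega)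
  rw [hM] at hcut
  obtain ⟨x', y', heq⟩ := hcut
  rw [conv_cut ![(x : List Γ), (y : List Γ), z] 2 a hcomp hai (le_of_lt hij)
      (by simpa [hlenw] using hjl)] at heq
  simp only [Matrix.cons_val_two, Matrix.tail_cons, Matrix.head_cons] at heq
  rw [update2] at heq
  have h3 := congrFun (conv_injective heq) 2
  simp only [Matrix.cons_val_two, Matrix.tail_cons, Matrix.head_cons] at h3
  have h0 := congrFun (conv_injective heq) 0
  have h1 := congrFun (conv_injective heq) 1
  simp only [Matrix.cons_val_zero, Matrix.cons_val_one, Matrix.head_cons] at h0 h1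
  have hx : x' = x := Subtype.ext h0.symm
  have hy : y' = y := Subtype.ext h1.symm
  rw [hx, hy] at h3
  have hlt : (z.take i ++ z.drop j).length < z.length := by
    rw [List.length_append, List.length_take, List.length_drop]
    have : j ≤ z.length := by simpa [hlenw] using hjl
    omega
  rw [h3] at hlt
  exact lt_irrefl _ hlt

lemma bound0 {σ : Type} [Fintype σ] (M : DFA (Fin 3 → Option Γ) σ) (f : A → A → A)
    (hM : M.accepts = {w | ∃ x y : A, w = conv ![(x : List Γ), (y : List Γ), (f x y : List Γ)]})
    (y : A) (hc : ∀ x x' : A, f x' y = f x y → x' = x) (x : A) :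
    (x : List Γ).length ≤
      max (y : List Γ).length (f x y : List Γ).length + Fintype.card σ := by
  by_contra hcon
  push_neg at hcon
  set a := max (y : List Γ).length (f x y : List Γ).length with ha
  set z : List Γ := (f x y : List Γ) with hz
  set X : List Γ := (x : List Γ) with hX
  have hmem : conv ![X, (y : List Γ), z] ∈ M.accepts := by
    rw [hM]; exact ⟨x, y, rfl⟩
  have hcomp : ∀ i : Fin 3, i ≠ 0 → (![X, (y : List Γ), z] i).length ≤ a := by
    intro i hi
    fin_cases i
    · simp at hi
    · simp [ha]
    · simp [ha, hz]
  have hsup : (Finset.univ.sup fun i => (![X, (y : List Γ), z] i).length) = X.length := by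
    apply sup_eq (i₀ := 0)
    intro i
    fin_cases i
    · simp
    · simp; omega
    · simp; omega
  have hlenw : (conv ![X, (y : List Γ), z]).length = X.length := by
    simp [conv, hsup]
  obtain ⟨i, j, hai, hij, hjl, hcut⟩ := dfa_cut M hmem (a := a) (by omega)
  rw [hM] at hcut
  obtain ⟨x', y', heq⟩ := hcut
  rw [conv_cut ![X, (y : List Γ), z] 0 a hcomp hai (le_of_lt hij)
      (by simpa [hlenw] using hjl)] at heq
  simp only [Matrix.cons_val_zero] at heq
  rw [update0] at heq
  have h0 := congrFun (conv_injective heq) 0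
  have h1 := congrFun (conv_injective heq) 1
  have h2 := congrFun (conv_injective heq) 2
  simp only [Matrix.cons_val_zero, Matrix.cons_val_one, Matrix.head_cons,
    Matrix.cons_val_two, Matrix.tail_cons] at h0 h1 h2
  have hy : y' = y := Subtype.ext h1.symm
  have hf : f x' y' = f x y := Subtype.ext (h2.symm.trans hz.symm)
  rw [hy] at hf
  have hx : x' = x := hc x x' hf
  rw [hx] at h0
  have hlt : (X.take i ++ X.drop j).length < X.length := by
    rw [List.length_append, List.length_take, List.length_drop]
    have : j ≤ X.length := by simpa [hlenw] using hjl
    omega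
  rw [h0] at hlt
  exact lt_irrefl _ hlt

end AutoAux

/-- No infinite field has an automatic presentation. -/
theorem infinite_field_not_automatic
    (D : Type*) [Field D] [Infinite D] :
    ¬ ∃ (Γ : Type) (_ : Fintype Γ) (A : Set (List Γ))
        (add mul : A → A → A) (zero one : A) (e : D ≃ A),
        Language.IsRegular (A : Language Γ) ∧
        Language.IsRegular
          {w | ∃ x y : A, w = conv ![(x : List Γ), (y : List Γ), (add x y : List Γ)]} ∧
        Language.IsRegular
          {w | ∃ x y : A, w = conv ![(x : List Γ), (y : List Γ), (mul x y : List Γ)]} ∧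
        e 0 = zero ∧ e 1 = one ∧
        (∀ x y : D, e (x + y) = add (e x) (e y)) ∧
        (∀ x y : D, e (x * y) = mul (e x) (e y)) := by
  rintro ⟨Γ, instΓ, A, add, mul, zero, one, e, hAreg, hAddReg, hMulReg, he0, he1, hadd, hmul⟩
  classical
  obtain ⟨lam, hlam⟩ : ∃ lam : D → ℕ, ∀ u, lam u = ((e u : A) : List Γ).length :=
    ⟨_, fun _ => rfl⟩
  obtain ⟨σa, insta, Ma, hMa⟩ := hAddReg
  obtain ⟨σm, instm, Mm, hMm⟩ := hMulReg
  obtain ⟨σA, instA, MA, hMA⟩ := hAreg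
  obtain ⟨c, hca, hcm⟩ : ∃ c, Fintype.card σa ≤ c ∧ Fintype.card σm ≤ c :=
    ⟨max _ _, le_max_left _ _, le_max_right _ _⟩
  set p : ℕ := Fintype.card σA with hp
  -- basic length bounds
  have B1 : ∀ u v : D, lam (u + v) ≤ max (lam u) (lam v) + c := by
    intro u v
    have h := AutoAux.bound3 Ma add hMa (e u) (e v)
    rw [← hadd u v] at h
    simp only [← hlam] at h
    omega
  have B2 : ∀ u v : D, lam (u * v) ≤ max (lam u) (lam v) + c := by
    intro u v
    have h := AutoAux.bound3 Mm mul hMm (e u) (e v)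
    rw [← hmul u v] at h
    simp only [← hlam] at h
    omega
  have B3 : ∀ u v : D, lam u ≤ max (lam v) (lam (u + v)) + c := by
    intro u v
    have hcanc : ∀ x x' : A, add x' (e v) = add x (e v) → x' = x := by
      intro x x' h
      have h1 : add x (e v) = e (e.symm x + v) := by rw [hadd, e.apply_symm_apply]
      have h2 : add x' (e v) = e (e.symm x' + v) := by rw [hadd, e.apply_symm_apply]
      rw [h1, h2] at h
      have h3 := add_right_cancel (e.injective h)
      calc x' = e (e.symm x') := (e.apply_symm_apply x').symm
        _ = e (e.symm x) := by rw [h3]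
        _ = x := e.apply_symm_apply x
    have h := AutoAux.bound0 Ma add hMa (e v) hcanc (e u)
    rw [← hadd u v] at h
    simp only [← hlam] at h
    omega
  have B4 : ∀ u v : D, v ≠ 0 → lam u ≤ max (lam v) (lam (u * v)) + c := by
    intro u v hv
    have hcanc : ∀ x x' : A, mul x' (e v) = mul x (e v) → x' = x := by
      intro x x' h
      have h1 : mul x (e v) = e (e.symm x * v) := by rw [hmul, e.apply_symm_apply]
      have h2 : mul x' (e v) = e (e.symm x' * v) := by rw [hmul, e.apply_symm_apply]
      rw [h1, h2] at h
      have h3 := mul_right_cancel₀ hv (e.injective h)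
      calc x' = e (e.symm x') := (e.apply_symm_apply x').symm
        _ = e (e.symm x) := by rw [h3]
        _ = x := e.apply_symm_apply x
    have h := AutoAux.bound0 Mm mul hMm (e v) hcanc (e u)
    rw [← hmul u v] at h
    simp only [← hlam] at h
    omega
  have Bsub : ∀ u v : D, lam (u - v) ≤ max (lam u) (lam v) + c := by
    intro u v
    have h := B3 (u - v) v
    rw [sub_add_cancel] at h
    omega
  -- finiteness of balls
  have hinjD : Function.Injective (fun u : D => ((e u : A) : List Γ)) := by
    intro u v h
    exact e.injective (Subtype.ext h)
  have hfin : ∀ b : ℕ, {u : D | lam u ≤ b}.Finite := by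
    intro b
    have heq : {u : D | lam u ≤ b} =
        (fun u : D => ((e u : A) : List Γ)) ⁻¹' {l | l.length ≤ b} := by
      ext u
      simp [hlam]
    rw [heq]
    exact Set.Finite.preimage hinjD.injOn (List.finite_length_le Γ b)
  have hfinsub : ∀ b : ℕ, Finite {u : D // lam u ≤ b} := fun b => (hfin b).to_subtype
  -- alphabet nonempty
  have hΓ1 : 1 ≤ Fintype.card Γ := by
    by_contra h0
    push_neg at h0
    have hemp : IsEmpty Γ := Fintype.card_eq_zero_iff.mp (by omega)
    have hnil : ∀ l : List Γ, l = [] := by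
      intro l
      cases l with
      | nil => rfl
      | cons a _ => exact (hemp.false a).elim
    have h01 : ((e 0 : A) : List Γ) = ((e 1 : A) : List Γ) := by
      rw [hnil ((e 0 : A) : List Γ), hnil ((e 1 : A) : List Γ)]
    exact zero_ne_one (e.injective (Subtype.ext h01) : (0 : D) = 1)
  set S : ℕ := Fintype.card Γ + 1 with hS
  -- counting upper bound
  have hcard : ∀ b : ℕ, Nat.card {u : D // lam u ≤ b} ≤ S ^ (b + 1) := by
    intro b
    have hemb : Function.Injective
        (fun (u : {u : D // lam u ≤ b}) (i : Fin (b + 1)) =>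
          ((e u.1 : A) : List Γ)[(i : ℕ)]?) := by
      intro u v h
      apply Subtype.ext
      apply e.injective
      apply Subtype.ext
      apply List.ext_getElem?
      intro k
      by_cases hk : k < b + 1
      · exact congrFun h ⟨k, hk⟩
      · have hu := u.2
        have hv := v.2
        rw [hlam] at hu hv
        rw [List.getElem?_eq_none (by omega), List.getElem?_eq_none (by omega)]
    have hle := Nat.card_le_card_of_injective _ hemb
    have hcount : Nat.card (Fin (b + 1) → Option Γ) = S ^ (b + 1) := by
      rw [Nat.card_eq_fintype_card, Fintype.card_fun, Fintype.card_option, Fintype.card_fin]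
    omega
  -- existence of long elements
  have hbig : ∀ b : ℕ, ∃ u : D, b ≤ lam u := by
    intro b
    by_contra h
    push_neg at h
    have hsub : (Set.univ : Set D) ⊆ {u : D | lam u ≤ b} := fun u _ => le_of_lt (h u)
    exact Set.infinite_univ ((hfin b).subset hsub)
  -- syndeticity of lengths
  have hsynd : ∀ b : ℕ, ∃ t : D, b ≤ lam t ∧ lam t ≤ b + p := by
    intro b
    obtain ⟨u, hu⟩ := hbig b
    have hwA : ((e u : A) : List Γ) ∈ MA.accepts := by
      rw [hMA]; exact (e u).2
    rw [hlam] at hu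
    obtain ⟨w', hw', hb1, hb2⟩ := AutoAux.syndetic MA hwA hu
    rw [hMA] at hw'
    have hlen : lam (e.symm ⟨w', hw'⟩) = w'.length := by
      rw [hlam, e.apply_symm_apply]
    exact ⟨e.symm ⟨w', hw'⟩, by omega, by omega⟩
  -- the iterated injection
  obtain ⟨q, hq⟩ : ∃ q : ℕ, q = 6 * c + p + 1 := ⟨_, rfl⟩
  have chain : ∀ n m : ℕ, ∃ (b : ℕ) (g : (Fin (m + 1) → {u : D // lam u ≤ n}) → D),
      n ≤ b ∧ b ≤ n + m * q ∧ Function.Injective g ∧ ∀ v, lam (g v) ≤ b := by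
    intro n m
    induction m with
    | zero =>
      refine ⟨n, fun v => (v 0).1, le_refl n, by omega, ?_, fun v => (v 0).2⟩
      intro v v' h
      funext i
      rw [Fin.eq_zero i]
      exact Subtype.ext h
    | succ m ih =>
      obtain ⟨b, g, hnb, hble, hinj, hbnd⟩ := ih
      obtain ⟨t, ht1, ht2⟩ := hsynd (b + 4 * c + 1)
      have hmq : (m + 1) * q = m * q + q := by ring
      refine ⟨b + q, fun v => g (Fin.init v) * t + (v (Fin.last (m + 1))).1,
        by omega, by omega, ?_, ?_⟩
      · intro v v' hEq
        simp only at hEq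
        have hU : g (Fin.init v) = g (Fin.init v') := by
          by_contra hne
          have hsub0 : g (Fin.init v) - g (Fin.init v') ≠ 0 := sub_ne_zero_of_ne hne
          have hkey : t * (g (Fin.init v) - g (Fin.init v')) =
              (v' (Fin.last (m + 1))).1 - (v (Fin.last (m + 1))).1 := by
            linear_combination hEq
          have h1 : lam ((v' (Fin.last (m + 1))).1 - (v (Fin.last (m + 1))).1) ≤ n + c := by
            have h := Bsub (v' (Fin.last (m + 1))).1 (v (Fin.last (m + 1))).1
            have hv1 := (v' (Fin.last (m + 1))).2
            have hv2 := (v (Fin.last (m + 1))).2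
            omega
          have h2 : lam (g (Fin.init v) - g (Fin.init v')) ≤ b + c := by
            have h := Bsub (g (Fin.init v)) (g (Fin.init v'))
            have hg1 := hbnd (Fin.init v)
            have hg2 := hbnd (Fin.init v')
            omega
          have h3 := B4 t (g (Fin.init v) - g (Fin.init v')) hsub0
          rw [hkey] at h3
          omega
        have hlast : v (Fin.last (m + 1)) = v' (Fin.last (m + 1)) := by
          apply Subtype.ext
          rw [hU] at hEq
          exact add_left_cancel hEq
        have hinit : Fin.init v = Fin.init v' := hinj hU
        funext i
        rw [← Fin.snoc_init_self v, ← Fin.snoc_init_self v', hinit, hlast]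
      · intro v
        have h1 := B2 (g (Fin.init v)) t
        have h2 := B1 (g (Fin.init v) * t) (v (Fin.last (m + 1))).1
        have hv := (v (Fin.last (m + 1))).2
        have hg := hbnd (Fin.init v)
        simp only
        omega
  -- choose n with a large ball
  obtain ⟨n, hn⟩ : ∃ n : ℕ, S ^ (2 * q) ≤ Nat.card {u : D // lam u ≤ n} := by
    obtain ⟨emb⟩ : Nonempty (ℕ ↪ D) := ⟨Infinite.natEmbedding D⟩
    set K := S ^ (2 * q) with hK
    refine ⟨(Finset.range K).sup fun i => lam (emb i), ?_⟩
    haveI := hfinsub ((Finset.range K).sup fun i => lam (emb i))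
    have hmap : Function.Injective
        (fun i : Fin K => (⟨emb i, Finset.le_sup (f := fun i => lam (emb i))
          (Finset.mem_range.mpr i.2)⟩ : {u : D // lam u ≤ _})) := by
      intro i j h
      exact Fin.ext (emb.injective (congrArg Subtype.val h))
    have hle := Nat.card_le_card_of_injective _ hmap
    rwa [Nat.card_eq_fintype_card, Fintype.card_fin] at hle
  -- the contradiction
  obtain ⟨b, g, hnb, hble, hinj, hbnd⟩ := chain n n
  haveI := hfinsub n
  haveI := hfinsub (n + n * q)
  have hinj' : Function.Injective
      (fun v : Fin (n + 1) → {u : D // lam u ≤ n} =>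
        (⟨g v, le_trans (hbnd v) hble⟩ : {u : D // lam u ≤ n + n * q})) := by
    intro v v' h
    exact hinj (congrArg Subtype.val h)
  have hle1 := Nat.card_le_card_of_injective _ hinj'
  rw [Nat.card_pi, Finset.prod_const, Finset.card_univ, Fintype.card_fin] at hle1
  have hle2 := hcard (n + n * q)
  have hKpow : (S ^ (2 * q)) ^ (n + 1) ≤ (Nat.card {u : D // lam u ≤ n}) ^ (n + 1) :=
    Nat.pow_le_pow_left hn _
  have hfinal : S ^ (2 * q * (n + 1)) ≤ S ^ (n + n * q + 1) := by
    calc S ^ (2 * q * (n + 1)) = (S ^ (2 * q)) ^ (n + 1) := by rw [pow_mul]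
      _ ≤ (Nat.card {u : D // lam u ≤ n}) ^ (n + 1) := hKpow
      _ ≤ Nat.card {u : D // lam u ≤ n + n * q} := hle1
      _ ≤ S ^ (n + n * q + 1) := hle2
  have hexp : n + n * q + 1 < 2 * q * (n + 1) := by nlinarith
  have hlt := Nat.pow_lt_pow_right (a := S) (by omega) hexp
  omega
end

section
/- The random graph has no automatic presentation. More precisely, there do not exist a finite alphabet Σ, a regular language A ⊆ Σ*, and a symmetric irreflexive binary relation E on A whose convolution is a regular language, such that the graph (A,E) satisfies the random-graph extension property: for every finite set Y ⊆ A of vertices and every partition of Y into disjoint sets X₁ and X₂, there exists a vertex y ∈ A with (y,x) ∈ E for every x ∈ X₁ and (y,x) ∉ E for every x ∈ X₂. -/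
/-!
Suppose the random graph had an automatic presentation and let `c n` count the vertices of
length at most `n`. By the extension property every set of such vertices is the exact trace of
the neighbourhood of some vertex `y`. If `y` is longer than `n + K`, with `K` the number of pairs
(state of the vertex automaton, set of states from which the edge automaton accepts the rest of
`y`'s track), two cut positions beyond `n` carry the same pair and the segment between them can be
excised without changing membership in `A` or adjacency to any vertex of length `≤ n`. Hence
`2 ^ c n ≤ c (n + K)`, so `c` grows like a tower of exponentials, whereas `c n ≤ (|Σ| + 1) ^ n`.
-/

variable {α : Type*}

lemma conv_pair (x v : List α) :
    conv ![x, v] = (List.range (max x.length v.length)).map fun k => ![x[k]?, v[k]?] := by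
  have hsup : (Finset.univ.sup fun i => (![x, v] i).length) = max x.length v.length := by
    simp [Fin.univ_succ]
  simp only [conv, hsup]
  congr! 2 with k
  funext i; fin_cases i <;> rfl

@[simp]
lemma length_conv_pair (x v : List α) : (conv ![x, v]).length = max x.length v.length := by
  simp [conv_pair]

@[simp]
lemma getElem_conv_pair (x v : List α) (k : ℕ) (hk : k < (conv ![x, v]).length) :
    (conv ![x, v])[k] = ![x[k]?, v[k]?] := by
  simp [conv_pair]

lemma conv_pair_injective {x v x' v' : List α} (h : conv ![x, v] = conv ![x', v']) :
    x = x' ∧ v = v' := by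
  have hlen := congrArg List.length h
  have key : ∀ k : ℕ, x[k]? = x'[k]? ∧ v[k]? = v'[k]? := by
    intro k
    by_cases hk : k < (conv ![x, v]).length
    · have := List.getElem_of_eq h hk
      simp only [getElem_conv_pair] at this
      exact ⟨by simpa using congrFun this 0, by simpa using congrFun this 1⟩
    · simp only [length_conv_pair] at hlen hk
      rw [List.getElem?_eq_none (by omega), List.getElem?_eq_none (by omega),
        List.getElem?_eq_none (by omega), List.getElem?_eq_none (by omega)]
      simp
  exact ⟨List.ext_getElem? fun k => (key k).1, List.ext_getElem? fun k => (key k).2⟩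

lemma conv_pair_eq_append {x : List α} {i : ℕ} (hx : x.length ≤ i) (v : List α) :
    conv ![x, v] = conv ![x, v.take i] ++ conv ![[], v.drop i] := by
  apply List.ext_getElem (by simp; omega)
  intro k hk _
  simp only [length_conv_pair] at hk
  rw [getElem_conv_pair, List.getElem_append]
  split_ifs with h <;> rw [getElem_conv_pair] <;>
    simp only [length_conv_pair, List.length_take] at h
  · simp [List.getElem?_take]
    omega
  · rw [List.getElem?_eq_none (l := x) (by omega), List.getElem?_drop]
    simp only [List.getElem?_nil, length_conv_pair, List.length_take]
    congr 3
    omega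

namespace DFA

variable {σ : Type*} (M : DFA α σ)

lemma append_mem_accepts_iff_of_acceptsFrom_eq {s t : List α}
    (h : {q | s ∈ M.acceptsFrom q} = {q | t ∈ M.acceptsFrom q}) (p : List α) :
    p ++ s ∈ M.accepts ↔ p ++ t ∈ M.accepts := by
  simp only [DFA.mem_accepts, DFA.eval, DFA.evalFrom_of_append]
  exact Set.ext_iff.mp h _

lemma eval_take_append_drop_of_eval_take_eq {w : List α} {i j : ℕ}
    (h : M.eval (w.take i) = M.eval (w.take j)) :
    M.eval (w.take i ++ w.drop j) = M.eval w := by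
  conv_rhs => rw [← List.take_append_drop j w]
  unfold DFA.eval at h ⊢
  rw [M.evalFrom_of_append, M.evalFrom_of_append, h]

end DFA

section Pumping

variable {σA σE : Type*} [Fintype σA] [Fintype σE]
  (MA : DFA α σA) (ME : DFA (Fin 2 → Option α) σE)

lemma exists_shorter_conv_equiv {n : ℕ} {v : List α}
    (hv : n + Fintype.card σA * 2 ^ Fintype.card σE < v.length) :
    ∃ v' : List α, v'.length < v.length ∧ MA.eval v' = MA.eval v ∧
      ∀ x : List α, x.length ≤ n → (conv ![x, v'] ∈ ME.accepts ↔ conv ![x, v] ∈ ME.accepts) := by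
  classical
  let φ : Fin (Fintype.card σA * 2 ^ Fintype.card σE + 1) → σA × Set σE := fun t =>
    (MA.eval (v.take (n + t)), {q | conv ![[], v.drop (n + t)] ∈ ME.acceptsFrom q})
  obtain ⟨t₁, t₂, hne, heq⟩ := Fintype.exists_ne_map_eq_of_card_lt φ (by simp [Fintype.card_set])
  wlog hlt : t₁ < t₂ generalizing t₁ t₂
  · exact this t₂ t₁ hne.symm heq.symm (lt_of_le_of_ne (not_lt.mp hlt) hne.symm)
  have ht₂ := t₂.isLt
  have htake : (v.take (n + t₁) ++ v.drop (n + t₂)).take (n + t₁) = v.take (n + t₁) := by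
    rw [List.take_append_of_le_length (by simp; omega), List.take_take, min_self]
  have hdrop : (v.take (n + t₁) ++ v.drop (n + t₂)).drop (n + t₁) = v.drop (n + t₂) :=
    List.drop_left' (by simp; omega)
  refine ⟨v.take (n + t₁) ++ v.drop (n + t₂), ?_,
    MA.eval_take_append_drop_of_eval_take_eq (congrArg Prod.fst heq), fun x hx => ?_⟩
  · simp only [List.length_append, List.length_take, List.length_drop]
    have : (t₁ : ℕ) < t₂ := hlt
    omega
  · rw [conv_pair_eq_append (i := n + t₁) (by omega), htake, hdrop,
      conv_pair_eq_append (i := n + t₁) (by omega) v]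
    exact ME.append_mem_accepts_iff_of_acceptsFrom_eq (congrArg Prod.snd heq).symm _

lemma exists_short_conv_equiv (n : ℕ) (v : List α) :
    ∃ v' : List α, v'.length ≤ n + Fintype.card σA * 2 ^ Fintype.card σE ∧
      MA.eval v' = MA.eval v ∧
      ∀ x : List α, x.length ≤ n → (conv ![x, v'] ∈ ME.accepts ↔ conv ![x, v] ∈ ME.accepts) := by
  induction v using WellFounded.induction (measure List.length).wf with
  | _ v ih =>
  by_cases hv : v.length ≤ n + Fintype.card σA * 2 ^ Fintype.card σE
  · exact ⟨v, hv, rfl, fun _ _ => Iff.rfl⟩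
  obtain ⟨w, hwv, hw, hwx⟩ := exists_shorter_conv_equiv MA ME (not_le.mp hv)
  obtain ⟨v', hv', hv'w, hv'x⟩ := ih w hwv
  exact ⟨v', hv', hv'w.trans hw, fun x hx => (hv'x x hx).trans (hwx x hx)⟩

end Pumping

lemma le_mul_add_of_two_pow_le {c : ℕ → ℕ} {K C : ℕ} (hstep : ∀ n, 2 ^ c n ≤ c (n + K))
    (hbound : ∀ n, c n ≤ C ^ n) (m : ℕ) : c m ≤ C * (m + K) := by
  refine (Nat.pow_le_pow_iff_right (by norm_num : 1 < 2)).mp ?_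
  calc 2 ^ c m ≤ C ^ (m + K) := (hstep m).trans (hbound _)
    _ ≤ (2 ^ C) ^ (m + K) := Nat.pow_le_pow_left Nat.lt_two_pow_self.le _
    _ = 2 ^ (C * (m + K)) := (pow_mul _ _ _).symm

lemma not_forall_le_pow_of_two_pow_le {c : ℕ → ℕ} {K : ℕ} (hstep : ∀ n, 2 ^ c n ≤ c (n + K))
    (C : ℕ) : ¬ ∀ n, c n ≤ C ^ n := by
  intro hbound
  -- `c` grows at least linearly along multiples of `K`; one more step makes that exponential,
  -- against the linear bound `c m ≤ C * (m + K)`.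
  have hlin : ∀ k, k ≤ c (k * K) := by
    intro k
    induction k with
    | zero => exact Nat.zero_le _
    | succ k ih =>
      calc k + 1 ≤ c (k * K) + 1 := by omega
        _ ≤ 2 ^ c (k * K) := Nat.lt_two_pow_self
        _ ≤ c ((k + 1) * K) := by rw [add_one_mul]; exact hstep _
  have hexp : ∀ k, 2 ^ k ≤ C * K * (k + 2) := fun k =>
    calc 2 ^ k ≤ 2 ^ c (k * K) := Nat.pow_le_pow_right (by norm_num) (hlin k)
      _ ≤ c (k * K + K) := hstep _
      _ ≤ C * (k * K + K + K) := le_mul_add_of_two_pow_le hstep hbound _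
      _ = C * K * (k + 2) := by ring
  have hsq : (2 * C * K + 1) ^ 2 ≤ 2 ^ (4 * C * K) := by
    rw [show 4 * C * K = 2 * C * K * 2 by ring, pow_mul]
    exact Nat.pow_le_pow_left Nat.lt_two_pow_self _
  have := hexp (4 * C * K)
  nlinarith

lemma conv_pair_mem_setOf_iff {A : Set (List α)} {E : List α → List α → Prop} {x y : List α}
    (hx : x ∈ A) (hy : y ∈ A) :
    conv ![x, y] ∈ {w | ∃ x ∈ A, ∃ y ∈ A, E x y ∧ w = conv ![x, y]} ↔ E x y := by
  refine ⟨?_, fun h => ⟨x, hx, y, hy, h, rfl⟩⟩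
  rintro ⟨x', -, y', -, h, hconv⟩
  obtain ⟨rfl, rfl⟩ := conv_pair_injective hconv
  exact h

lemma ncard_setOf_length_le_le (Γ : Type*) [Fintype Γ] (n : ℕ) :
    {w : List Γ | w.length ≤ n}.ncard ≤ (Fintype.card Γ + 1) ^ n := by
  have hinj : Set.InjOn (fun w : List Γ => fun i : Fin n => w[i.1]?) {w | w.length ≤ n} := by
    intro w hw w' hw' h
    refine List.ext_getElem? fun k => ?_
    by_cases hk : k < n
    · exact congrFun h ⟨k, hk⟩
    · rw [List.getElem?_eq_none (by simp_all; omega), List.getElem?_eq_none (by simp_all; omega)]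
  calc {w : List Γ | w.length ≤ n}.ncard ≤ (Set.univ : Set (Fin n → Option Γ)).ncard :=
        Set.ncard_le_ncard_of_injOn _ (fun _ _ => Set.mem_univ _) hinj
    _ = (Fintype.card Γ + 1) ^ n := by simp

lemma two_pow_ncard_le_ncard_of_shatters {β γ : Type*} {T : Set β} {U : Set γ} (hT : T.Finite)
    (hU : U.Finite) (P : γ → β → Prop) (h : ∀ S ⊆ T, ∃ y ∈ U, ∀ x ∈ T, P y x ↔ x ∈ S) :
    2 ^ T.ncard ≤ U.ncard := by
  have : Nonempty γ := let ⟨y, _⟩ := h ∅ (Set.empty_subset T); ⟨y⟩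
  choose! f hfU hf using h
  rw [← Set.ncard_powerset T hT]
  refine Set.ncard_le_ncard_of_injOn f (fun S hS => hfU S hS) (fun S hS S' hS' hSS' => ?_) hU
  ext x
  by_cases hx : x ∈ T
  · rw [← hf S hS x hx, ← hf S' hS' x hx, hSS']
  · exact iff_of_false (fun h => hx (hS h)) (fun h => hx (hS' h))

def HasExtensionProperty {β : Type*} (A : Set β) (E : β → β → Prop) : Prop :=
  ∀ Y : Finset β, ↑Y ⊆ A →
    ∀ X₁ X₂ : Finset β, Disjoint X₁ X₂ →
      (∀ x, x ∈ Y ↔ x ∈ X₁ ∨ x ∈ X₂) →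
      ∃ y ∈ A, (∀ x ∈ X₁, E y x) ∧ (∀ x ∈ X₂, ¬ E y x)

lemma HasExtensionProperty.exists_forall_iff_mem {β : Type*} {A : Set β} {E : β → β → Prop}
    (hA : HasExtensionProperty A E) {T : Set β} (hT : T.Finite) (hTA : T ⊆ A) (S : Set β) :
    ∃ y ∈ A, ∀ x ∈ T, E y x ↔ x ∈ S := by
  classical
  obtain ⟨y, hyA, hyS, hyT⟩ := hA hT.toFinset (by simpa using hTA) (hT.toFinset.filter (· ∈ S))
    (hT.toFinset.filter (· ∉ S)) (Finset.disjoint_filter_filter_not _ _ _)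
    (fun x => by simp only [Finset.mem_filter, ← and_or_left, em, and_true])
  refine ⟨y, hyA, fun x hx => ⟨fun hE => by_contra fun hxS => ?_, fun hxS => ?_⟩⟩
  · exact hyT x (by simpa using ⟨hx, hxS⟩) hE
  · exact hyS x (by simpa using ⟨hx, hxS⟩)

lemma two_pow_ncard_le_ncard_of_hasExtensionProperty {Γ σA σE : Type*} [Fintype Γ] [Fintype σA]
    [Fintype σE] {A : Set (List Γ)} {E : List Γ → List Γ → Prop} {MA : DFA Γ σA}
    {ME : DFA (Fin 2 → Option Γ) σE} (hMA : MA.accepts = A)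
    (hME : ∀ x ∈ A, ∀ y ∈ A, E y x ↔ conv ![x, y] ∈ ME.accepts)
    (hext : HasExtensionProperty A E) (n : ℕ) :
    2 ^ (A ∩ {w | w.length ≤ n}).ncard ≤
      (A ∩ {w | w.length ≤ n + Fintype.card σA * 2 ^ Fintype.card σE}).ncard := by
  have hfin (m : ℕ) : (A ∩ {w : List Γ | w.length ≤ m}).Finite :=
    (List.finite_length_le Γ m).subset Set.inter_subset_right
  refine two_pow_ncard_le_ncard_of_shatters (hfin _) (hfin _) E fun S _ => ?_
  obtain ⟨y, hyA, hy⟩ := hext.exists_forall_iff_mem (hfin n) Set.inter_subset_left S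
  obtain ⟨y', hy'len, hy'y, hy'⟩ := exists_short_conv_equiv MA ME n y
  have hy'A : y' ∈ A := by
    have hyM : MA.eval y ∈ MA.accept := (Set.ext_iff.mp hMA y).mpr hyA
    exact (Set.ext_iff.mp hMA y').mp (show MA.eval y' ∈ MA.accept by rwa [hy'y])
  refine ⟨y', ⟨hy'A, hy'len⟩, fun x hx => ?_⟩
  rw [hME x hx.1 y' hy'A, hy' x hx.2, ← hME x hx.1 y hyA]
  exact hy x hx

/-- The random graph has no automatic presentation: there is no graph on a regular
set of words, with regular (convoluted) edge relation, satisfying the random-graph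
extension property. -/
theorem random_graph_not_automatic :
    ¬ ∃ (Γ : Type) (_ : Fintype Γ) (A : Set (List Γ)) (E : List Γ → List Γ → Prop),
        Language.IsRegular (A : Language Γ) ∧
        (∀ x ∈ A, ¬ E x x) ∧
        (∀ x ∈ A, ∀ y ∈ A, E x y → E y x) ∧
        Language.IsRegular {w | ∃ x ∈ A, ∃ y ∈ A, E x y ∧ w = conv ![x, y]} ∧
        (∀ Y : Finset (List Γ), ↑Y ⊆ A →
          ∀ X₁ X₂ : Finset (List Γ), Disjoint X₁ X₂ →
            (∀ x, x ∈ Y ↔ x ∈ X₁ ∨ x ∈ X₂) →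
            ∃ y ∈ A, (∀ x ∈ X₁, E y x) ∧ (∀ x ∈ X₂, ¬ E y x)) := by
  rintro ⟨Γ, _, A, E, ⟨σA, _, MA, hMA⟩, -, hsymm, ⟨σE, _, ME, hME⟩, hext⟩
  have hadj : ∀ x ∈ A, ∀ y ∈ A, E y x ↔ conv ![x, y] ∈ ME.accepts := fun x hx y hy =>
    (Iff.intro (hsymm y hy x hx) (hsymm x hx y hy)).trans <|
      (conv_pair_mem_setOf_iff hx hy).symm.trans (Set.ext_iff.mp hME _).symm
  refine not_forall_le_pow_of_two_pow_le
    (two_pow_ncard_le_ncard_of_hasExtensionProperty hMA hadj hext) (Fintype.card Γ + 1) ?_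
  exact fun n => (Set.ncard_le_ncard Set.inter_subset_right (List.finite_length_le Γ n)).trans
    (ncard_setOf_length_le_le Γ n)
end
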